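/- arXiv:1804.07510 — 2 statements merged into one kernel-verified Lean document; each statement's English description precedes it below -/
import Mathlib

section
/- Let M ≥ 1 and P ≥ 2 be integers, G ∈ ℂ, and on a probability space let S^{[m]} (m = 1,…,M) and E^{[m,p]} (m = 1,…,M, p = 1,…,P) be square-integrable complex-valued random variables such that all E^{[m,p]} have mean zero and common variance E[|E^{[m,p]}|²] = σ_E², and the family {E^{[m,p]}} is pairwise uncorrelated (E[E^{[m,p]} · conj(E^{[m',p']})] = 0 whenever (m,p) ≠ (m',p')). Define Ĝ^{[m,p]} = G + S^{[m]} + E^{[m,p]} and Ĝ^{[m]} = (1/P) Σ_{p=1}^{P} Ĝ^{[m,p]}. Then the noise variance estimate σ̂²_n = (1/(M² P (P−1))) Σ_{m=1}^{M} Σ_{p=1}^{P} |Ĝ^{[m]} − Ĝ^{[m,p]}|² satisfies E[σ̂²_n] = σ_E² / (M P). -/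
/-! Within a realization, `G + S^{[m]}` is common to all periods and cancels from
`Ĝ^{[m]} − Ĝ^{[m,p]}`, leaving the combination `∑_q (1/P − δ_{qp}) E^{[m,q]}` of the noise terms.
For an uncorrelated family of common variance `σ`, `E|∑_q c_q E_q|² = (∑_q |c_q|²) σ`, and here
`∑_q |1/P − δ_{qp}|² = 1 − 1/P`. Each of the `MP` terms therefore has expectation
`(P − 1) σ_E / P`, and the normalization `1/(M²P(P−1))` turns their sum into `σ_E/(MP)`. -/

open MeasureTheory Finset ComplexConjugate

section

variable {Ω ι : Type*} [MeasurableSpace Ω] {μ : Measure Ω}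

lemma integrable_mul_conj {f g : Ω → ℂ} (hf : MemLp f 2 μ) (hg : MemLp g 2 μ) :
    Integrable (fun ω => f ω * conj (g ω)) μ :=
  hf.integrable_mul hg.star

lemma integral_mul_conj_eq_ite [DecidableEq ι] {f : ι → Ω → ℂ} {σ : ℝ}
    (hvar : ∀ i, ∫ ω, ‖f i ω‖ ^ 2 ∂μ = σ)
    (horth : ∀ i j, i ≠ j → ∫ ω, f i ω * conj (f j ω) ∂μ = 0) (i j : ι) :
    ∫ ω, f i ω * conj (f j ω) ∂μ = if i = j then (σ : ℂ) else 0 := by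
  split_ifs with h
  · subst h
    simp_rw [Complex.mul_conj', ← Complex.ofReal_pow, integral_complex_ofReal, hvar]
  · exact horth i j h

lemma integral_norm_sum_mul_sq [Fintype ι] {f : ι → Ω → ℂ} {σ : ℝ}
    (hf : ∀ i, MemLp (f i) 2 μ) (hvar : ∀ i, ∫ ω, ‖f i ω‖ ^ 2 ∂μ = σ)
    (horth : ∀ i j, i ≠ j → ∫ ω, f i ω * conj (f j ω) ∂μ = 0) (c : ι → ℂ) :
    ∫ ω, ‖∑ i, c i * f i ω‖ ^ 2 ∂μ = (∑ i, ‖c i‖ ^ 2) * σ := by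
  classical
  have hint : ∀ i j, Integrable (fun ω => c i * conj (c j) * (f i ω * conj (f j ω))) μ :=
    fun i j => (integrable_mul_conj (hf i) (hf j)).const_mul _
  apply Complex.ofReal_injective
  calc ((∫ ω, ‖∑ i, c i * f i ω‖ ^ 2 ∂μ : ℝ) : ℂ)
      = ∫ ω, ∑ i, ∑ j, c i * conj (c j) * (f i ω * conj (f j ω)) ∂μ := by
        rw [← integral_complex_ofReal]
        congr 1 with ω
        rw [Complex.ofReal_pow, ← Complex.mul_conj', map_sum, sum_mul_sum]
        simp only [map_mul]
        exact sum_congr rfl fun i _ => sum_congr rfl fun j _ => by ring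
    _ = ∑ i, ∑ j, c i * conj (c j) * (if i = j then (σ : ℂ) else 0) := by
        rw [integral_finsetSum _ fun i _ => integrable_finsetSum _ fun j _ => hint i j]
        simp_rw [integral_finsetSum _ fun j _ => hint _ j, integral_const_mul,
          integral_mul_conj_eq_ite hvar horth]
    _ = (((∑ i, ‖c i‖ ^ 2) * σ : ℝ) : ℂ) := by
        simp [mul_ite, Complex.mul_conj', sum_mul]

lemma sum_norm_inv_card_sub_ite_sq [Fintype ι] [DecidableEq ι] (j : ι) :
    ∑ i, ‖1 / (Fintype.card ι : ℂ) - if i = j then 1 else 0‖ ^ 2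
      = 1 - 1 / (Fintype.card ι : ℝ) := by
  have hcard : (Fintype.card ι : ℝ) ≠ 0 :=
    Nat.cast_ne_zero.mpr (Fintype.card_pos_iff.mpr ⟨j⟩).ne'
  have hsq : ∀ i, ‖1 / (Fintype.card ι : ℂ) - if i = j then 1 else 0‖ ^ 2
      = 1 / (Fintype.card ι : ℝ) ^ 2 - (2 / Fintype.card ι - 1) * if i = j then 1 else 0 := by
    intro i
    rw [Complex.sq_norm, Complex.normSq_apply]
    split_ifs <;> simp <;> ring
  simp_rw [hsq, sum_sub_distrib, ← mul_sum, sum_ite_eq', if_pos (mem_univ j), sum_const,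
    card_univ, nsmul_eq_mul]
  field_simp
  ring

lemma mul_sum_sub_eq_sum_sub_ite_mul {R : Type*} [CommRing R] [Fintype ι] [DecidableEq ι]
    (a : R) (x : ι → R) (j : ι) :
    a * ∑ i, x i - x j = ∑ i, (a - if i = j then 1 else 0) * x i := by
  simp [sub_mul, sum_sub_distrib, mul_sum]

lemma inv_card_mul_sum_add_sub_add {K : Type*} [Field K] [CharZero K] [Fintype ι]
    (a : K) (x : ι → K) (j : ι) :
    1 / (Fintype.card ι : K) * ∑ i, (a + x i) - (a + x j)
      = 1 / Fintype.card ι * ∑ i, x i - x j := by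
  have hcard : (Fintype.card ι : K) ≠ 0 :=
    Nat.cast_ne_zero.mpr (Fintype.card_pos_iff.mpr ⟨j⟩).ne'
  rw [sum_add_distrib, sum_const, card_univ, nsmul_eq_mul]
  field_simp
  ring

lemma integral_norm_inv_card_mul_sum_sub_sq [Fintype ι] {f : ι → Ω → ℂ} {σ : ℝ}
    (hf : ∀ i, MemLp (f i) 2 μ) (hvar : ∀ i, ∫ ω, ‖f i ω‖ ^ 2 ∂μ = σ)
    (horth : ∀ i j, i ≠ j → ∫ ω, f i ω * conj (f j ω) ∂μ = 0) (j : ι) :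
    ∫ ω, ‖1 / (Fintype.card ι : ℂ) * ∑ i, f i ω - f j ω‖ ^ 2 ∂μ
      = (1 - 1 / (Fintype.card ι : ℝ)) * σ := by
  classical
  simp_rw [mul_sum_sub_eq_sum_sub_ite_mul, integral_norm_sum_mul_sq hf hvar horth,
    sum_norm_inv_card_sub_ite_sq]

end

theorem robust_bla_noise_variance_expectation_general
    {Ω : Type*} [MeasurableSpace Ω] (μ : Measure Ω)
    (M P : ℕ) (hP : 2 ≤ P) (G : ℂ) (σE : ℝ)
    (S : Fin M → Ω → ℂ) (E : Fin M → Fin P → Ω → ℂ)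
    (hE2 : ∀ m p, MemLp (E m p) 2 μ)
    (hEvar : ∀ m p, ∫ ω, ‖E m p ω‖ ^ 2 ∂μ = σE)
    (hEuncorr : ∀ m p m' p', (m, p) ≠ (m', p') →
      ∫ ω, E m p ω * (starRingEnd ℂ) (E m' p' ω) ∂μ = 0) :
    ∫ ω, (1 / ((M : ℝ) ^ 2 * (P : ℝ) * ((P : ℝ) - 1))) *
        ∑ m : Fin M, ∑ p : Fin P,
          ‖(1 / (P : ℂ)) * (∑ p' : Fin P, (G + S m ω + E m p' ω))
            - (G + S m ω + E m p ω)‖ ^ 2 ∂μ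
      = σE / ((M : ℝ) * (P : ℝ)) := by
  have hshift : ∀ (a : ℂ) (x : Fin P → ℂ) (p : Fin P),
      1 / (P : ℂ) * ∑ q, (a + x q) - (a + x p) = 1 / (P : ℂ) * ∑ q, x q - x p := by
    simpa using inv_card_mul_sum_add_sub_add (ι := Fin P) (K := ℂ)
  have hdev : ∀ m p, ∫ ω, ‖1 / (P : ℂ) * ∑ q, E m q ω - E m p ω‖ ^ 2 ∂μ
      = (1 - 1 / (P : ℝ)) * σE := by
    intro m p
    simpa using integral_norm_inv_card_mul_sum_sub_sq (hE2 m) (hEvar m)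
      (fun p p' h => hEuncorr m p m p' (by simpa using h)) p
  have hint : ∀ m p, Integrable (fun ω => ‖1 / (P : ℂ) * ∑ q, E m q ω - E m p ω‖ ^ 2) μ :=
    fun m p => (((memLp_finsetSum univ fun q _ => hE2 m q).const_mul (1 / (P : ℂ))).sub
      (hE2 m p)).integrable_norm_pow two_ne_zero
  simp_rw [hshift]
  rw [integral_const_mul,
    integral_finsetSum _ fun m _ => integrable_finsetSum _ fun p _ => hint m p]
  simp_rw [integral_finsetSum _ fun p _ => hint _ p, hdev]
  have hP1 : (P : ℝ) - 1 ≠ 0 := by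
    have : (2 : ℝ) ≤ P := by exact_mod_cast hP
    linarith
  rcases eq_or_ne (M : ℝ) 0 with hM0 | hM0
  · simp [hM0]
  · simp only [sum_const, card_univ, Fintype.card_fin, nsmul_eq_mul]
    field_simp

/-- **Expected value of the robust noise variance estimate in the process noise case.**
With `Ĝ^{[m,p]} = G + S^{[m]} + E^{[m,p]}` and `Ĝ^{[m]} = (1/P) Σ_p Ĝ^{[m,p]}`, where the
combined process-and-output-noise terms `E^{[m,p]}` are zero mean with common variance
`σ_E²` and pairwise uncorrelated, the noise variance estimate
`σ̂²_n = (1/(M²P(P−1))) Σ_m Σ_p |Ĝ^{[m]} − Ĝ^{[m,p]}|²` has expectation `σ_E²/(MP)`. -/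
theorem robust_bla_noise_variance_expectation
    {Ω : Type*} [MeasurableSpace Ω] (μ : Measure Ω) [IsProbabilityMeasure μ]
    (M P : ℕ) (hM : 1 ≤ M) (hP : 2 ≤ P) (G : ℂ) (σE : ℝ)
    (S : Fin M → Ω → ℂ) (E : Fin M → Fin P → Ω → ℂ)
    (hS2 : ∀ m, MemLp (S m) 2 μ) (hE2 : ∀ m p, MemLp (E m p) 2 μ)
    (hEmean : ∀ m p, ∫ ω, E m p ω ∂μ = 0)
    (hEvar : ∀ m p, ∫ ω, ‖E m p ω‖ ^ 2 ∂μ = σE)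
    (hEuncorr : ∀ m p m' p', (m, p) ≠ (m', p') →
      ∫ ω, E m p ω * (starRingEnd ℂ) (E m' p' ω) ∂μ = 0) :
    ∫ ω, (1 / ((M : ℝ) ^ 2 * (P : ℝ) * ((P : ℝ) - 1))) *
        ∑ m : Fin M, ∑ p : Fin P,
          ‖(1 / (P : ℂ)) * (∑ p' : Fin P, (G + S m ω + E m p' ω))
            - (G + S m ω + E m p ω)‖ ^ 2 ∂μ
      = σE / ((M : ℝ) * (P : ℝ)) :=
  robust_bla_noise_variance_expectation_general μ M P hP G σE S E hE2 hEvar hEuncorr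
end

section
/- Let f : ℝ → ℝ be f(x) = x + 0.1·x³, let σ_u > 0 and σ_n ≥ 0, and let U and N be independent real Gaussian random variables with mean 0 and variances σ_u² and σ_n² respectively. Then the function b ↦ E[(f(U + N) − b·U)²] on ℝ attains its unique minimum at b₀ = 1 + 0.3·σ_u² + 0.3·σ_n², and moreover b₀ = E[f(U+N)·U]/E[U²]. -/
/-!
Gaussian integration by parts (Stein's lemma) gives `E[(U - μ) g(U)] = v E[g'(U)]` for
`U ~ N(μ, v)`. Applied to `g = f(· + n)` and integrated against the law of `N`, it yields
Bussgang's identity `E[f(U + N) U] = σu² E[f'(U + N)]`, and since `U + N ~ N(0, σu² + σn²)`,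
`E[f'(U + N)] = 1 + 0.3 (σu² + σn²)`. The minimisation is least squares in `L²`:
`E[(Y - bU)²] = E[(Y - b₀U)²] + (b - b₀)² E[U²]` for `b₀ = E[YU] / E[U²]`.
-/

open MeasureTheory ProbabilityTheory

/-- The joint law of the independent zero-mean Gaussian input (variance `σu²`) and
process noise (variance `σn²`) of the Hammerstein example. -/
noncomputable def hammersteinLaw (σu σn : ℝ) : Measure (ℝ × ℝ) :=
  (gaussianReal 0 ⟨σu ^ 2, sq_nonneg σu⟩).prod (gaussianReal 0 ⟨σn ^ 2, sq_nonneg σn⟩)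

open Real Polynomial
open scoped NNReal

lemma integrable_gaussianReal_iff {μ : ℝ} {v : ℝ≥0} (hv : v ≠ 0) {f : ℝ → ℝ} :
    Integrable f (gaussianReal μ v) ↔ Integrable (fun x => gaussianPDFReal μ v x * f x) := by
  rw [gaussianReal_of_var_ne_zero μ hv, integrable_withDensity_iff_integrable_smul'
    (measurable_gaussianPDF μ v) (ae_of_all _ fun _ => gaussianPDF_lt_top)]
  simp [toReal_gaussianPDF]

lemma hasDerivAt_gaussianPDFReal (μ : ℝ) (v : ℝ≥0) (x : ℝ) :
    HasDerivAt (gaussianPDFReal μ v) (-((x - μ) / v) * gaussianPDFReal μ v x) x := by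
  have h : HasDerivAt (fun x => -(x - μ) ^ 2 / (2 * v)) (-(2 * (x - μ)) / (2 * v)) x := by
    simpa using (((hasDerivAt_id x).sub_const μ).pow 2).neg.div_const (2 * (v : ℝ))
  rw [gaussianPDFReal_def]
  exact (h.exp.const_mul (√(2 * π * v))⁻¹).congr_deriv (by ring)

theorem integral_sub_mul_gaussianReal_eq_mul_integral_deriv {μ : ℝ} {v : ℝ≥0} {g g' : ℝ → ℝ}
    (hg : ∀ x, HasDerivAt g (g' x) x)
    (hxg : Integrable (fun x => (x - μ) * g x) (gaussianReal μ v))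
    (hg' : Integrable g' (gaussianReal μ v)) (hgi : Integrable g (gaussianReal μ v)) :
    ∫ x, (x - μ) * g x ∂gaussianReal μ v = v * ∫ x, g' x ∂gaussianReal μ v := by
  rcases eq_or_ne v 0 with rfl | hv
  · simp [gaussianReal_zero_var]
  rw [integrable_gaussianReal_iff hv] at hxg hg' hgi
  have hv' : (v : ℝ) ≠ 0 := by exact_mod_cast hv
  have ibp := integral_mul_deriv_eq_deriv_mul_of_integrable (fun x _ => hg x)
    (fun x _ => hasDerivAt_gaussianPDFReal μ v x)
    ((hxg.const_mul (-(v : ℝ)⁻¹)).congr (ae_of_all _ fun x => by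
      simp only [Pi.mul_apply]
      field_simp))
    (hg'.congr (ae_of_all _ fun x => mul_comm _ _)) (hgi.congr (ae_of_all _ fun x => mul_comm _ _))
  have hlhs : ∫ x, g x * (-((x - μ) / v) * gaussianPDFReal μ v x)
      = -(v : ℝ)⁻¹ * ∫ x, gaussianPDFReal μ v x * ((x - μ) * g x) := by
    rw [← integral_const_mul]
    congr 1 with x
    ring
  have hrhs : ∫ x, g' x * gaussianPDFReal μ v x = ∫ x, gaussianPDFReal μ v x * g' x := by
    simp only [mul_comm]
  rw [hlhs, hrhs, neg_mul, neg_inj, inv_mul_eq_iff_eq_mul₀ hv'] at ibp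
  simpa only [integral_gaussianReal_eq_integral_smul hv, smul_eq_mul] using ibp

section PolynomialMoments

variable {μ : ℝ} {v : ℝ≥0}

lemma integrable_pow_gaussianReal (n : ℕ) : Integrable (fun x => x ^ n) (gaussianReal μ v) :=
  (memLp_id_gaussianReal n).integrable_norm_pow'.mono' (by fun_prop)
    (ae_of_all _ fun x => by simp [norm_pow])

lemma integrable_eval_gaussianReal (P : ℝ[X]) :
    Integrable (fun x => P.eval x) (gaussianReal μ v) := by
  induction P using Polynomial.induction_on' with
  | add P Q hP hQ =>
    simp only [eval_add]
    exact hP.add hQ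
  | monomial n a => simpa using (integrable_pow_gaussianReal n).const_mul a

lemma memLp_eval_gaussianReal (P : ℝ[X]) : MemLp (fun x => P.eval x) 2 (gaussianReal μ v) :=
  (memLp_two_iff_integrable_sq P.continuous.aestronglyMeasurable).mpr
    ((integrable_eval_gaussianReal (P ^ 2)).congr (ae_of_all _ fun x => by simp))

theorem integral_sub_mul_eval_gaussianReal (P : ℝ[X]) :
    ∫ x, (x - μ) * P.eval x ∂gaussianReal μ v = v * ∫ x, P.derivative.eval x ∂gaussianReal μ v :=
  integral_sub_mul_gaussianReal_eq_mul_integral_deriv (fun x => P.hasDerivAt x)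
    ((integrable_eval_gaussianReal ((X - C μ) * P)).congr (ae_of_all _ fun x => by simp))
    (integrable_eval_gaussianReal _) (integrable_eval_gaussianReal _)

lemma integral_sq_gaussianReal : ∫ x, x ^ 2 ∂gaussianReal 0 v = v := by
  simpa [sq] using integral_sub_mul_eval_gaussianReal (μ := 0) (v := v) X

end PolynomialMoments

section GaussianProd

variable {μ₁ μ₂ : ℝ} {v₁ v₂ : ℝ≥0}

lemma measurePreserving_add_gaussianReal_prod :
    MeasurePreserving (fun p : ℝ × ℝ => p.1 + p.2)
      ((gaussianReal μ₁ v₁).prod (gaussianReal μ₂ v₂)) (gaussianReal (μ₁ + μ₂) (v₁ + v₂)) :=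
  ⟨by fun_prop, gaussianReal_conv_gaussianReal⟩

lemma memLp_eval_add_gaussianReal_prod (P : ℝ[X]) :
    MemLp (fun p : ℝ × ℝ => P.eval (p.1 + p.2)) 2
      ((gaussianReal μ₁ v₁).prod (gaussianReal μ₂ v₂)) :=
  (memLp_eval_gaussianReal P).comp_measurePreserving measurePreserving_add_gaussianReal_prod

lemma integral_eval_add_gaussianReal_prod (P : ℝ[X]) :
    ∫ p : ℝ × ℝ, P.eval (p.1 + p.2) ∂(gaussianReal μ₁ v₁).prod (gaussianReal μ₂ v₂)
      = ∫ s, P.eval s ∂gaussianReal (μ₁ + μ₂) (v₁ + v₂) := by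
  rw [← measurePreserving_add_gaussianReal_prod.map_eq,
    integral_map (by fun_prop) P.continuous.aestronglyMeasurable]

theorem integral_sub_mul_eval_add_gaussianReal_prod (P : ℝ[X]) :
    ∫ p : ℝ × ℝ, (p.1 - μ₁) * P.eval (p.1 + p.2) ∂(gaussianReal μ₁ v₁).prod (gaussianReal μ₂ v₂)
      = v₁ * ∫ s, P.derivative.eval s ∂gaussianReal (μ₁ + μ₂) (v₁ + v₂) := by
  have hint : Integrable (fun p : ℝ × ℝ => (p.1 - μ₁) * P.eval (p.1 + p.2))
      ((gaussianReal μ₁ v₁).prod (gaussianReal μ₂ v₂)) :=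
    ((memLp_eval_gaussianReal (X - C μ₁)).comp_measurePreserving
      measurePreserving_fst).integrable_mul (memLp_eval_add_gaussianReal_prod P)
      |>.congr (ae_of_all _ fun p => by simp)
  have hint' : Integrable (fun p : ℝ × ℝ => P.derivative.eval (p.1 + p.2))
      ((gaussianReal μ₁ v₁).prod (gaussianReal μ₂ v₂)) :=
    measurePreserving_add_gaussianReal_prod.integrable_comp_of_integrable
      (integrable_eval_gaussianReal _)
  have hinner (y : ℝ) : ∫ x, (x - μ₁) * P.eval (x + y) ∂gaussianReal μ₁ v₁
      = v₁ * ∫ x, P.derivative.eval (x + y) ∂gaussianReal μ₁ v₁ := by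
    have := integral_sub_mul_eval_gaussianReal (μ := μ₁) (v := v₁) (P.comp (X + C y))
    simpa [derivative_comp] using this
  rw [integral_prod_symm _ hint, ← integral_eval_add_gaussianReal_prod, integral_prod_symm _ hint',
    ← integral_const_mul]
  simp_rw [hinner]

lemma integral_fst_sq_gaussianReal_prod (ν : Measure ℝ) [IsProbabilityMeasure ν] :
    ∫ p : ℝ × ℝ, p.1 ^ 2 ∂(gaussianReal 0 v₁).prod ν = v₁ := by
  rw [integral_fun_fst (fun x : ℝ => x ^ 2), integral_sq_gaussianReal, probReal_univ, one_smul]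

lemma integral_add_mul_cube_mul_fst_gaussianReal_prod (a c : ℝ) :
    ∫ p : ℝ × ℝ, (a * (p.1 + p.2) + c * (p.1 + p.2) ^ 3) * p.1
        ∂(gaussianReal 0 v₁).prod (gaussianReal 0 v₂)
      = v₁ * (a + 3 * c * (v₁ + v₂)) := by
  set f : ℝ[X] := C a * X + C c * X ^ 3
  have hf' (s : ℝ) : f.derivative.eval s = a + 3 * c * s ^ 2 := by
    simp [f]
    ring
  calc ∫ p : ℝ × ℝ, (a * (p.1 + p.2) + c * (p.1 + p.2) ^ 3) * p.1
        ∂(gaussianReal 0 v₁).prod (gaussianReal 0 v₂)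
      = ∫ p : ℝ × ℝ, (p.1 - 0) * f.eval (p.1 + p.2)
        ∂(gaussianReal 0 v₁).prod (gaussianReal 0 v₂) := by
        congr 1 with p
        simp [f]
        ring
    _ = v₁ * ∫ s, (a + 3 * c * s ^ 2) ∂gaussianReal (0 + 0) (v₁ + v₂) := by
        simp only [integral_sub_mul_eval_add_gaussianReal_prod, hf']
    _ = v₁ * (a + 3 * c * (v₁ + v₂)) := by
        rw [integral_add (integrable_const a) ((integrable_pow_gaussianReal 2).const_mul _),
          integral_const_mul, add_zero, integral_sq_gaussianReal, integral_const, probReal_univ,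
          one_smul, NNReal.coe_add]

end GaussianProd

section LeastSquares

variable {α : Type*} [MeasurableSpace α] {μ : Measure α} {Y U : α → ℝ}

lemma integral_sub_mul_sq (hY : MemLp Y 2 μ) (hU : MemLp U 2 μ) (b : ℝ) :
    ∫ x, (Y x - b * U x) ^ 2 ∂μ
      = ∫ x, Y x ^ 2 ∂μ - 2 * b * ∫ x, Y x * U x ∂μ + b ^ 2 * ∫ x, U x ^ 2 ∂μ := by
  have hYU : Integrable (fun x => Y x * U x) μ := hY.integrable_mul hU
  calc ∫ x, (Y x - b * U x) ^ 2 ∂μ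
      = ∫ x, (Y x ^ 2 - (2 * b) * (Y x * U x) + b ^ 2 * U x ^ 2) ∂μ := by
        congr 1 with x
        ring
    _ = _ := by
      rw [integral_add (hY.integrable_sq.sub' (hYU.const_mul _)) (hU.integrable_sq.const_mul _),
        integral_sub hY.integrable_sq (hYU.const_mul _), integral_const_mul, integral_const_mul]

theorem integral_sub_mul_sq_lt_of_ne (hY : MemLp Y 2 μ) (hU : MemLp U 2 μ)
    (hU₀ : 0 < ∫ x, U x ^ 2 ∂μ) {b : ℝ} (hb : b ≠ (∫ x, Y x * U x ∂μ) / ∫ x, U x ^ 2 ∂μ) :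
    ∫ x, (Y x - (∫ x, Y x * U x ∂μ) / (∫ x, U x ^ 2 ∂μ) * U x) ^ 2 ∂μ
      < ∫ x, (Y x - b * U x) ^ 2 ∂μ := by
  rw [integral_sub_mul_sq hY hU, integral_sub_mul_sq hY hU]
  set c := ∫ x, Y x * U x ∂μ
  set d := ∫ x, U x ^ 2 ∂μ
  have hgap : 0 < d * (b - c / d) ^ 2 := mul_pos hU₀ (sq_pos_of_ne_zero (sub_ne_zero.mpr hb))
  have hsplit : (b ^ 2 * d - 2 * b * c) - ((c / d) ^ 2 * d - 2 * (c / d) * c)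
      = d * (b - c / d) ^ 2 := by
    field_simp
    ring
  linarith

end LeastSquares

theorem hammerstein_bla_gain_general (σu σn : ℝ) (hσu : 0 < σu)
    (b₀ : ℝ) (hb₀ : b₀ = 1 + 0.3 * σu ^ 2 + 0.3 * σn ^ 2) :
    (∀ b : ℝ, b ≠ b₀ →
      ∫ p : ℝ × ℝ, (((p.1 + p.2) + 0.1 * (p.1 + p.2) ^ 3) - b₀ * p.1) ^ 2
          ∂(hammersteinLaw σu σn)
        < ∫ p : ℝ × ℝ, (((p.1 + p.2) + 0.1 * (p.1 + p.2) ^ 3) - b * p.1) ^ 2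
          ∂(hammersteinLaw σu σn)) ∧
    b₀ = (∫ p : ℝ × ℝ, ((p.1 + p.2) + 0.1 * (p.1 + p.2) ^ 3) * p.1 ∂(hammersteinLaw σu σn))
          / (∫ p : ℝ × ℝ, p.1 ^ 2 ∂(hammersteinLaw σu σn)) := by
  unfold hammersteinLaw
  set vu : ℝ≥0 := ⟨σu ^ 2, sq_nonneg σu⟩
  set vn : ℝ≥0 := ⟨σn ^ 2, sq_nonneg σn⟩
  have hvu : (vu : ℝ) = σu ^ 2 := rfl
  have hvn : (vn : ℝ) = σn ^ 2 := rfl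
  have hY := memLp_eval_add_gaussianReal_prod (μ₁ := 0) (μ₂ := 0) (v₁ := vu) (v₂ := vn)
    (X + C 0.1 * X ^ 3)
  have hU : MemLp (fun p : ℝ × ℝ => p.1) 2 ((gaussianReal 0 vu).prod (gaussianReal 0 vn)) :=
    (memLp_id_gaussianReal 2).comp_measurePreserving measurePreserving_fst
  have hYU := integral_add_mul_cube_mul_fst_gaussianReal_prod (v₁ := vu) (v₂ := vn) 1 0.1
  have hU2 := integral_fst_sq_gaussianReal_prod (v₁ := vu) (gaussianReal 0 vn)
  simp only [eval_add, eval_mul, eval_pow, eval_C, eval_X] at hY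
  simp only [one_mul, hvu, hvn] at hYU hU2
  set ν := (gaussianReal 0 vu).prod (gaussianReal 0 vn)
  have hgain : b₀ = (∫ p : ℝ × ℝ, ((p.1 + p.2) + 0.1 * (p.1 + p.2) ^ 3) * p.1 ∂ν)
      / ∫ p : ℝ × ℝ, p.1 ^ 2 ∂ν := by
    rw [hYU, hU2, hb₀, mul_div_cancel_left₀ _ (pow_pos hσu 2).ne']
    ring
  refine ⟨fun b hb => ?_, hgain⟩
  rw [hgain] at hb ⊢
  exact integral_sub_mul_sq_lt_of_ne hY hU (hU2 ▸ pow_pos hσu 2) hb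

/-- **BLA gain of the Hammerstein example (Bussgang).** For `f(x) = x + 0.1x³` and
independent centered Gaussians `U`, `N` with variances `σu²`, `σn²`, the map
`b ↦ E[(f(U+N) − bU)²]` attains its unique minimum at `b₀ = 1 + 0.3σu² + 0.3σn²`, and
`b₀ = E[f(U+N)·U] / E[U²]`. -/
theorem hammerstein_bla_gain (σu σn : ℝ) (hσu : 0 < σu) (hσn : 0 ≤ σn)
    (b₀ : ℝ) (hb₀ : b₀ = 1 + 0.3 * σu ^ 2 + 0.3 * σn ^ 2) :
    (∀ b : ℝ, b ≠ b₀ →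
      ∫ p : ℝ × ℝ, (((p.1 + p.2) + 0.1 * (p.1 + p.2) ^ 3) - b₀ * p.1) ^ 2
          ∂(hammersteinLaw σu σn)
        < ∫ p : ℝ × ℝ, (((p.1 + p.2) + 0.1 * (p.1 + p.2) ^ 3) - b * p.1) ^ 2
          ∂(hammersteinLaw σu σn)) ∧
    b₀ = (∫ p : ℝ × ℝ, ((p.1 + p.2) + 0.1 * (p.1 + p.2) ^ 3) * p.1 ∂(hammersteinLaw σu σn))
          / (∫ p : ℝ × ℝ, p.1 ^ 2 ∂(hammersteinLaw σu σn)) :=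
  hammerstein_bla_gain_general σu σn hσu b₀ hb₀
end
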